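/- For φ(t) = t^p log^α(C + t) with p > 1, α ∈ ℝ, and C sufficiently large, the quantity ν(t) = φ''(t)t/φ'(t) is bounded between p-1-δ and p-1+δ for any δ > 0 when C is chosen large enough (depending on p, α, δ); in particular φ satisfies a (p', q') growth condition with p' ≤ p ≤ q' arbitrarily close to p. -/
import Mathlib

open Real Set

/-- Explicit first derivative of s ↦ s^p · log(C+s)^α. -/
noncomputable def F1aux (p α C : ℝ) : ℝ → ℝ := fun s =>
  p * s ^ (p - 1) * Real.log (C + s) ^ α
    + s ^ p * (1 / (C + s) * α * Real.log (C + s) ^ (α - 1))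

lemma hasDerivAt_aux1 (p α C : ℝ) (hC : 1 < C) {s : ℝ} (hs : 0 < s) :
    HasDerivAt (fun s : ℝ => s ^ p * Real.log (C + s) ^ α) (F1aux p α C s) s := by
  have hCs : (0:ℝ) < C + s := by linarith
  have hCs1 : (1:ℝ) < C + s := by linarith
  have hlg : 0 < Real.log (C + s) := Real.log_pos hCs1
  have dlog : HasDerivAt (fun y : ℝ => Real.log (C + y)) (1 / (C + s)) s :=
    ((hasDerivAt_id s).const_add C).log hCs.ne'
  have h3 := dlog.rpow_const (p := α) (Or.inl hlg.ne')
  have h1 := Real.hasDerivAt_rpow_const (p := p) (Or.inl hs.ne')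
  exact h1.mul h3

lemma hasDerivAt_aux2 (p α C : ℝ) (hC : 1 < C) {t : ℝ} (ht : 0 < t) :
    HasDerivAt (F1aux p α C)
      (p * ((p - 1) * t ^ (p - 1 - 1)) * Real.log (C + t) ^ α
        + p * t ^ (p - 1) * (1 / (C + t) * α * Real.log (C + t) ^ (α - 1))
        + (p * t ^ (p - 1) * (1 / (C + t) * α * Real.log (C + t) ^ (α - 1))
          + t ^ p * ((0 * (C + t) - 1 * 1) / (C + t) ^ 2 * α * Real.log (C + t) ^ (α - 1)
            + 1 / (C + t) * α * (1 / (C + t) * (α - 1) * Real.log (C + t) ^ (α - 1 - 1))))) t := by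
  have hCt : (0:ℝ) < C + t := by linarith
  have hCt1 : (1:ℝ) < C + t := by linarith
  have hlg : 0 < Real.log (C + t) := Real.log_pos hCt1
  have dlog : HasDerivAt (fun y : ℝ => Real.log (C + y)) (1 / (C + t)) t :=
    ((hasDerivAt_id t).const_add C).log hCt.ne'
  have h3α := dlog.rpow_const (p := α) (Or.inl hlg.ne')
  have h3m := dlog.rpow_const (p := α - 1) (Or.inl hlg.ne')
  have T1 := ((Real.hasDerivAt_rpow_const (p := p - 1) (Or.inl ht.ne')).const_mul p).mul h3α
  have dinv : HasDerivAt (fun y : ℝ => 1 / (C + y))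
      ((0 * (C + t) - 1 * 1) / (C + t) ^ 2) t :=
    (hasDerivAt_const t (1:ℝ)).div ((hasDerivAt_id t).const_add C) hCt.ne'
  have G := (dinv.mul_const α).mul h3m
  have T2 := (Real.hasDerivAt_rpow_const (p := p) (Or.inl ht.ne')).mul G
  exact T1.add T2

/-- Auxiliary algebraic bound for the growth-rate ratio. -/
lemma ratio_bound_aux (p α δ L u : ℝ) (hp : 1 < p) (hδ : 0 < δ) (hu0 : 0 < u) (hu1 : u < 1)
    (hL1 : 1 ≤ L) (hM : |α| + (|α| * (p + 1) + |α| * |α - 1|) / δ + p ≤ p * L) :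
    p - 1 - δ ≤ (p * (p-1) * L * L + 2 * p * α * u * L + α * (α-1) * u * u - α * u * u * L)
        / (L * (p * L + α * u)) ∧
      (p * (p-1) * L * L + 2 * p * α * u * L + α * (α-1) * u * u - α * u * u * L)
        / (L * (p * L + α * u)) ≤ p - 1 + δ := by
  have hL0 : 0 < L := lt_of_lt_of_le one_pos hL1
  have hK0 : 0 ≤ (|α| * (p + 1) + |α| * |α - 1|) / δ := by positivity
  have hau : |α * u| ≤ |α| := by
    rw [abs_mul, abs_of_pos hu0]
    nlinarith [abs_nonneg α]
  have hau' := abs_le.mp hau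
  have hD0 : 0 < p * L + α * u := by nlinarith [abs_nonneg α]
  have hDpos : 0 < L * (p * L + α * u) := mul_pos hL0 hD0
  have hid : (p * (p-1) * L * L + 2 * p * α * u * L + α * (α-1) * u * u - α * u * u * L)
      - (p - 1) * (L * (p * L + α * u)) = α * u * L * (p + 1 - u) + α * (α-1) * u * u := by
    ring
  have h1 : |α * u * L * (p + 1 - u)| ≤ |α| * L * (p + 1) := by
    have he : |α * u * L * (p + 1 - u)| = |α| * (u * L * (p + 1 - u)) := by
      rw [abs_mul, abs_mul, abs_mul, abs_of_pos hu0, abs_of_pos hL0,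
        abs_of_pos (by linarith : (0:ℝ) < p + 1 - u)]
      ring
    rw [he]
    have h2 : u * L * (p + 1 - u) ≤ L * (p + 1) := by
      nlinarith [mul_nonneg hL0.le (show (0:ℝ) ≤ (p+1)*(1-u) + u*u by nlinarith)]
    nlinarith [abs_nonneg α]
  have h2 : |α * (α-1) * u * u| ≤ |α| * |α - 1| := by
    rw [abs_mul, abs_mul, abs_mul, abs_of_pos hu0]
    nlinarith [mul_nonneg (mul_nonneg (abs_nonneg α) (abs_nonneg (α-1)))
      (show (0:ℝ) ≤ 1 - u * u by nlinarith)]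
  have hKδ : |α| * (p + 1) + |α| * |α - 1| ≤ δ * (p * L - |α|) := by
    have h3 : (|α| * (p + 1) + |α| * |α - 1|) / δ ≤ p * L - |α| := by linarith
    calc |α| * (p + 1) + |α| * |α - 1|
        = δ * ((|α| * (p + 1) + |α| * |α - 1|) / δ) := by field_simp
      _ ≤ δ * (p * L - |α|) := by nlinarith
  have hNum : |(p * (p-1) * L * L + 2 * p * α * u * L + α * (α-1) * u * u - α * u * u * L)
      - (p - 1) * (L * (p * L + α * u))| ≤ δ * (L * (p * L + α * u)) := by
    rw [hid]
    calc |α * u * L * (p + 1 - u) + α * (α-1) * u * u|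
        ≤ |α * u * L * (p + 1 - u)| + |α * (α-1) * u * u| := abs_add_le _ _
      _ ≤ |α| * L * (p + 1) + |α| * |α - 1| := by linarith
      _ ≤ L * (|α| * (p + 1) + |α| * |α - 1|) := by
          nlinarith [mul_nonneg (mul_nonneg (abs_nonneg α) (abs_nonneg (α-1)))
            (show (0:ℝ) ≤ L - 1 by linarith)]
      _ ≤ L * (δ * (p * L - |α|)) := by nlinarith
      _ ≤ δ * (L * (p * L + α * u)) := by
          nlinarith [mul_nonneg (mul_nonneg hδ.le hL0.le)
            (show (0:ℝ) ≤ α * u + |α| by linarith [hau'.1])]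
  have hNum' := abs_le.mp hNum
  constructor
  · rw [le_div_iff₀ hDpos]
    have h := hNum'.1
    calc (p - 1 - δ) * (L * (p * L + α * u))
        = (p - 1) * (L * (p * L + α * u)) - δ * (L * (p * L + α * u)) := by ring
      _ ≤ p * (p-1) * L * L + 2 * p * α * u * L + α * (α-1) * u * u - α * u * u * L := by
          linarith
  · rw [div_le_iff₀ hDpos]
    have h := hNum'.2
    calc p * (p-1) * L * L + 2 * p * α * u * L + α * (α-1) * u * u - α * u * u * L
        ≤ (p - 1) * (L * (p * L + α * u)) + δ * (L * (p * L + α * u)) := by linarith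
      _ = (p - 1 + δ) * (L * (p * L + α * u)) := by ring

/-- For φ(t) = t^p·log^α(C+t), the growth rate ν(t) = φ''(t)t/φ'(t) lies within δ of p-1
for all t > 0, provided C is large enough depending on p, α, δ. -/
theorem log_perturbed_power_growth (p α : ℝ) (hp : 1 < p) :
    ∀ δ > 0, ∃ C₀ : ℝ, 1 < C₀ ∧ ∀ C ≥ C₀, ∀ t > 0,
      p - 1 - δ ≤
        (deriv (deriv (fun s : ℝ => s ^ p * Real.log (C + s) ^ α)) t * t
          / deriv (fun s : ℝ => s ^ p * Real.log (C + s) ^ α) t) ∧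
      (deriv (deriv (fun s : ℝ => s ^ p * Real.log (C + s) ^ α)) t * t
          / deriv (fun s : ℝ => s ^ p * Real.log (C + s) ^ α) t) ≤ p - 1 + δ := by
  intro δ hδ
  have hp0 : 0 < p := by linarith
  set X : ℝ := |α| + (|α| * (p + 1) + |α| * |α - 1|) / δ + p with hX
  set M : ℝ := max 1 (X / p) with hMdef
  have hM1 : 1 ≤ M := le_max_left _ _
  have hM0 : 0 < M := lt_of_lt_of_le one_pos hM1
  refine ⟨Real.exp M, ?_, ?_⟩
  · calc (1:ℝ) = Real.exp 0 := (Real.exp_zero).symm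
      _ < Real.exp M := Real.exp_lt_exp.mpr hM0
  intro C hC t ht
  have hexp1 : (1:ℝ) < Real.exp M := by
    calc (1:ℝ) = Real.exp 0 := (Real.exp_zero).symm
      _ < Real.exp M := Real.exp_lt_exp.mpr hM0
  have hC1 : 1 < C := lt_of_lt_of_le hexp1 hC
  have hC0 : (0:ℝ) < C := by linarith
  have hCt0 : (0:ℝ) < C + t := by linarith
  have hCt1 : (1:ℝ) < C + t := by linarith
  have hLM : M ≤ Real.log (C + t) := by
    rw [Real.le_log_iff_exp_le hCt0]
    calc Real.exp M ≤ C := hC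
      _ ≤ C + t := by linarith
  have hL1 : 1 ≤ Real.log (C + t) := hM1.trans hLM
  have hL0 : 0 < Real.log (C + t) := by linarith
  set f := fun s : ℝ => s ^ p * Real.log (C + s) ^ α with hfdef
  have eq1 : deriv f t = F1aux p α C t := (hasDerivAt_aux1 p α C hC1 ht).deriv
  have hev : deriv f =ᶠ[nhds t] F1aux p α C :=
    Filter.eventuallyEq_of_mem (Ioi_mem_nhds ht)
      (fun s hs => (hasDerivAt_aux1 p α C hC1 (mem_Ioi.mp hs)).deriv)
  have eq2 : deriv (deriv f) t
      = p * ((p - 1) * t ^ (p - 1 - 1)) * Real.log (C + t) ^ α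
        + p * t ^ (p - 1) * (1 / (C + t) * α * Real.log (C + t) ^ (α - 1))
        + (p * t ^ (p - 1) * (1 / (C + t) * α * Real.log (C + t) ^ (α - 1))
          + t ^ p * ((0 * (C + t) - 1 * 1) / (C + t) ^ 2 * α * Real.log (C + t) ^ (α - 1)
            + 1 / (C + t) * α * (1 / (C + t) * (α - 1) * Real.log (C + t) ^ (α - 1 - 1)))) :=
    hev.deriv_eq.trans (hasDerivAt_aux2 p α C hC1 ht).deriv
  rw [eq1, eq2]
  -- rpow splitting identities
  set L := Real.log (C + t) with hLdef
  have ht1 : t ^ (p - 1) = t ^ (p - 1 - 1) * t := by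
    have h : p - 1 - 1 + 1 = p - 1 := by ring
    calc t ^ (p - 1) = t ^ (p - 1 - 1 + 1) := by rw [h]
      _ = t ^ (p - 1 - 1) * t ^ (1:ℝ) := Real.rpow_add ht _ _
      _ = t ^ (p - 1 - 1) * t := by rw [Real.rpow_one]
  have ht2 : t ^ p = t ^ (p - 1 - 1) * t * t := by
    have h : p - 1 - 1 + 1 + 1 = p := by ring
    calc t ^ p = t ^ (p - 1 - 1 + 1 + 1) := by rw [h]
      _ = t ^ (p - 1 - 1 + 1) * t ^ (1:ℝ) := Real.rpow_add ht _ _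
      _ = t ^ (p - 1 - 1) * t ^ (1:ℝ) * t ^ (1:ℝ) := by rw [Real.rpow_add ht]
      _ = t ^ (p - 1 - 1) * t * t := by rw [Real.rpow_one]
  have hl1 : L ^ (α - 1) = L ^ (α - 1 - 1) * L := by
    have h : α - 1 - 1 + 1 = α - 1 := by ring
    calc L ^ (α - 1) = L ^ (α - 1 - 1 + 1) := by rw [h]
      _ = L ^ (α - 1 - 1) * L ^ (1:ℝ) := Real.rpow_add hL0 _ _
      _ = L ^ (α - 1 - 1) * L := by rw [Real.rpow_one]
  have hl2 : L ^ α = L ^ (α - 1 - 1) * L * L := by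
    have h : α - 1 - 1 + 1 + 1 = α := by ring
    calc L ^ α = L ^ (α - 1 - 1 + 1 + 1) := by rw [h]
      _ = L ^ (α - 1 - 1 + 1) * L ^ (1:ℝ) := Real.rpow_add hL0 _ _
      _ = L ^ (α - 1 - 1) * L ^ (1:ℝ) * L ^ (1:ℝ) := by rw [Real.rpow_add hL0]
      _ = L ^ (α - 1 - 1) * L * L := by rw [Real.rpow_one]
  have hden : F1aux p α C t
      = (t ^ (p - 1 - 1) * L ^ (α - 1 - 1) * t) * (L * (p * L + α * (t / (C + t)))) := by
    unfold F1aux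
    rw [← hLdef, ht2, ht1, hl2, hl1]
    field_simp
  have hnum : (p * ((p - 1) * t ^ (p - 1 - 1)) * L ^ α
        + p * t ^ (p - 1) * (1 / (C + t) * α * L ^ (α - 1))
        + (p * t ^ (p - 1) * (1 / (C + t) * α * L ^ (α - 1))
          + t ^ p * ((0 * (C + t) - 1 * 1) / (C + t) ^ 2 * α * L ^ (α - 1)
            + 1 / (C + t) * α * (1 / (C + t) * (α - 1) * L ^ (α - 1 - 1))))) * t
      = (t ^ (p - 1 - 1) * L ^ (α - 1 - 1) * t)
        * (p * (p-1) * L * L + 2 * p * α * (t / (C + t)) * L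
          + α * (α-1) * (t / (C + t)) * (t / (C + t)) - α * (t / (C + t)) * (t / (C + t)) * L) := by
    rw [ht2, ht1, hl2, hl1]
    field_simp
    ring
  rw [hden, hnum, mul_div_mul_left _ _
    (ne_of_gt (by positivity : (0:ℝ) < t ^ (p - 1 - 1) * L ^ (α - 1 - 1) * t))]
  have hu1 : t / (C + t) < 1 := (div_lt_one hCt0).mpr (by linarith)
  have hu0 : 0 < t / (C + t) := div_pos ht hCt0
  have hMX : X ≤ p * L := by
    have h1 : X / p ≤ M := le_max_right _ _
    have h2 : X / p ≤ L := h1.trans hLM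
    rw [div_le_iff₀ hp0] at h2
    linarith
  exact ratio_bound_aux p α δ L (t / (C + t)) hp hδ hu0 hu1 hL1 hMX
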